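/- Apartness is monotone in the matching: if w is a witness of p #^m p' in an observation tree and m ⊆ m', then w is a witness of p #^{m'} p'. -/

import Mathlib

open scoped Classical

/-- Actions of an MMT: inputs or timeouts of timers. -/
inductive Act (I X : Type) where
  | inp : I → Act I X
  | to  : X → Act I X

/-- Symbolic actions: inputs, or timeouts annotated with (constant, index). -/
inductive SymAct (I : Type) where
  | inp : I → SymAct I
  | to  : ℕ → ℕ → SymAct I

/-- Labels of the timed transition system, abstracting timer names on timeouts. -/
inductive TLabel (I O : Type) where
  | delay : ℝ → TLabel I O
  | inp   : I → O → TLabel I O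
  | tout  : O → TLabel I O

/-- A Mealy machine with timers (MMT). -/
structure MMT (I O X Q : Type) where
  q0 : Q
  chi : Q → Set X
  δ : Q → Act I X → Option (Q × O × Option (X × ℕ))

namespace MMT

variable {I O X Q X₁ Q₁ X₂ Q₂ X₃ Q₃ : Type}

/-- A transition occurring along a run. -/
structure Trans (I O X Q : Type) where
  src : Q
  act : Act I X
  out : O
  upd : Option (X × ℕ)
  dst : Q

/-- The list of transitions of the run of `M` from `p` reading `w`, if defined. -/
def trace? (M : MMT I O X Q) : Q → List (Act I X) → Option (List (Trans I O X Q))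
  | _, [] => some []
  | p, a :: rest =>
    (M.δ p a).bind fun t =>
      (trace? M t.1 rest).map fun l => ⟨p, a, t.2.1, t.2.2, t.1⟩ :: l

/-- The state reached from `p` after reading `w`, if the run is defined. -/
def stateAfter (M : MMT I O X Q) (p : Q) (w : List (Act I X)) : Option Q :=
  w.foldlM (fun q a => (M.δ q a).map fun t => t.1) p

/-- State of the symbolic-word computation: current state, index of next transition,
cause map, symbolic word so far, output word so far. -/
structure SymState (I O X Q : Type) where
  st : Q
  idx : ℕ
  cm : X → Option (ℕ × ℕ)
  sw : List (SymAct I)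
  ow : List O

noncomputable def symStep (M : MMT I O X Q) (σ : SymState I O X Q) (a : Act I X) :
    Option (SymState I O X Q) :=
  (M.δ σ.st a).bind fun t =>
    (match a with
      | Act.inp i => some (SymAct.inp i)
      | Act.to x => (σ.cm x).map fun (p : ℕ × ℕ) => SymAct.to p.1 p.2).map fun sa =>
      { st := t.1
        idx := σ.idx + 1
        cm := fun y => match t.2.2 with
          | some (x, c) => if y = x then some (c, σ.idx) else σ.cm y
          | none => σ.cm y
        sw := σ.sw ++ [sa]
        ow := σ.ow ++ [t.2.1] }

noncomputable def symRun (M : MMT I O X Q) (w : List (Act I X)) : Option (SymState I O X Q) :=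
  w.foldlM M.symStep ⟨M.q0, 1, fun _ => none, [], []⟩

/-- The symbolic input word of the run of `M` from the initial state reading `w`. -/
noncomputable def symWord (M : MMT I O X Q) (w : List (Act I X)) : Option (List (SymAct I)) :=
  (M.symRun w).map SymState.sw

/-- The output word of the run of `M` from the initial state reading `w`. -/
noncomputable def outWord (M : MMT I O X Q) (w : List (Act I X)) : Option (List O) :=
  (M.symRun w).map SymState.ow

/-- The cause map after reading `w` from the initial state. -/
noncomputable def causeAfter (M : MMT I O X Q) (w : List (Act I X)) :
    Option (X → Option (ℕ × ℕ)) :=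
  (M.symRun w).map SymState.cm

/-- cause(π, x) for the run π reading `w` from the initial state. -/
noncomputable def causeOf (M : MMT I O X Q) (w : List (Act I X)) (x : X) : Option (ℕ × ℕ) :=
  (M.causeAfter w).bind fun cm => cm x

/-! ### Timed semantics -/

/-- The initial configuration. -/
def initC (M : MMT I O X Q) : Q × (X → ℝ) := (M.q0, fun _ => 0)

/-- Delay transition between configurations. -/
def DelayStep (M : MMT I O X Q) (C : Q × (X → ℝ)) (d : ℝ) (C' : Q × (X → ℝ)) : Prop :=
  0 ≤ d ∧ (∀ x ∈ M.chi C.1, d ≤ C.2 x) ∧ C'.1 = C.1 ∧ C'.2 = fun x => C.2 x - d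

/-- Discrete transition between configurations, reading action `a` with output `o`. -/
def DStep (M : MMT I O X Q) (C : Q × (X → ℝ)) (a : Act I X) (o : O)
    (C' : Q × (X → ℝ)) : Prop :=
  ∃ u, M.δ C.1 a = some (C'.1, o, u) ∧
    (∀ x, a = Act.to x → x ∈ M.chi C.1 ∧ C.2 x = 0) ∧
    C'.2 = match u with
      | some (x, c) => Function.update C.2 x (c : ℝ)
      | none => C.2

/-- Steps labelled by `TLabel`s, abstracting the name of the timer that times out. -/
def Step (M : MMT I O X Q) (C : Q × (X → ℝ)) : TLabel I O → Q × (X → ℝ) → Prop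
  | TLabel.delay d => fun C' => M.DelayStep C d C'
  | TLabel.inp i o => fun C' => M.DStep C (Act.inp i) o C'
  | TLabel.tout o  => fun C' => ∃ x, M.DStep C (Act.to x) o C'

/-- A timed bisimulation between two MMTs. -/
def IsTimedBisim (M : MMT I O X₁ Q₁) (N : MMT I O X₂ Q₂)
    (R : Q₁ × (X₁ → ℝ) → Q₂ × (X₂ → ℝ) → Prop) : Prop :=
  R M.initC N.initC ∧
  (∀ C D, R C D → ∀ l C', M.Step C l C' → ∃ D', N.Step D l D' ∧ R C' D') ∧
  (∀ C D, R C D → ∀ l D', N.Step D l D' → ∃ C', M.Step C l C' ∧ R C' D')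

/-- Timed-bisimulation equivalence. -/
def TBisim (M : MMT I O X₁ Q₁) (N : MMT I O X₂ Q₂) : Prop :=
  ∃ R, IsTimedBisim M N R

inductive MultiStep (M : MMT I O X Q) : Q × (X → ℝ) → List (TLabel I O) → Q × (X → ℝ) → Prop
  | nil (C) : MultiStep M C [] C
  | cons {C l C' w C''} : M.Step C l C' → MultiStep M C' w C'' → MultiStep M C (l :: w) C''

/-- The set of timed traces of `M` (sequences of labels executable from the initial
configuration). -/
def Traces (M : MMT I O X Q) : Set (List (TLabel I O)) :=
  {w | ∃ C, MultiStep M M.initC w C}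

/-- Timed runs keeping the concrete actions: alternating delays and discrete steps. -/
inductive TRun (M : MMT I O X Q) : Q × (X → ℝ) → List (ℝ × Act I X) → Q × (X → ℝ) → Prop
  | nil (C) : TRun M C [] C
  | cons {C d C₁ a o C₂ rest C'} :
      M.DelayStep C d C₁ → M.DStep C₁ a o C₂ → TRun M C₂ rest C' →
      TRun M C ((d, a) :: rest) C'

/-- A word of actions is feasible if it is the untimed projection of a timed run from
the initial configuration. -/
def Feasible (M : MMT I O X Q) (w : List (Act I X)) : Prop :=
  ∃ ds : List ℝ, ∃ C, ds.length = w.length ∧ TRun M M.initC (ds.zip w) C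

/-- A configuration is reachable if some timed run from the initial configuration,
possibly followed by a delay, ends in it. -/
def Reachable (M : MMT I O X Q) (C : Q × (X → ℝ)) : Prop :=
  ∃ ts C₀ d, TRun M M.initC ts C₀ ∧ M.DelayStep C₀ d C

/-- The timers enabled in a state: active timers that reach value 0 in some reachable
configuration. -/
def enabled (M : MMT I O X Q) (q : Q) : Set X :=
  {x | x ∈ M.chi q ∧ ∃ κ, M.Reachable (q, κ) ∧ κ x = 0}

/-- Completeness: all inputs and all timeouts of enabled timers are defined. -/
def Complete (M : MMT I O X Q) : Prop :=
  ∀ q : Q, (∀ i : I, (M.δ q (Act.inp i)).isSome) ∧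
    (∀ x ∈ M.enabled q, (M.δ q (Act.to x)).isSome)

/-- All updates set timers to positive integer values. -/
def PosUpdates (M : MMT I O X Q) : Prop :=
  ∀ q a t, M.δ q a = some t → ∀ x c, t.2.2 = some (x, c) → 1 ≤ c

/-- s-learnable: complete and every (untimed) run from the initial state is feasible. -/
def SLearnable (M : MMT I O X Q) : Prop :=
  M.Complete ∧ ∀ w, (M.stateAfter M.q0 w).isSome → M.Feasible w

/-- The symbolic input language of `M`. -/
def SymLang (M : MMT I O X Q) : Set (List (SymAct I)) :=
  {s | ∃ w, M.Feasible w ∧ M.symWord w = some s}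

/-- Pairs (symbolic input word, output word) of feasible runs of `M`. -/
def SymLangO (M : MMT I O X Q) : Set (List (SymAct I) × List O) :=
  {p | ∃ w, M.Feasible w ∧ M.symWord w = some p.1 ∧ M.outWord w = some p.2}

/-- Symbolic equivalence of two MMTs. -/
def SymEquiv (M : MMT I O X₁ Q₁) (N : MMT I O X₂ Q₂) : Prop :=
  M.SymLang = N.SymLang ∧ ∀ s os, (s, os) ∈ M.SymLangO ↔ (s, os) ∈ N.SymLangO

/-- Race-free timed runs: positive delays, a timer is 0 after a delay iff it times out
next, and no timer is 0 after the final delay `dfin`. -/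
inductive RFRun (M : MMT I O X Q) :
    Q × (X → ℝ) → List (ℝ × Act I X) → ℝ → Q × (X → ℝ) → Prop
  | nil {C d C'} : 0 < d → M.DelayStep C d C' →
      (∀ x ∈ M.chi C'.1, C'.2 x ≠ 0) → RFRun M C [] d C'
  | cons {C d C₁ a o C₂ rest dfin C'} : 0 < d → M.DelayStep C d C₁ →
      (∀ x ∈ M.chi C₁.1, (C₁.2 x = 0 ↔ a = Act.to x)) →
      M.DStep C₁ a o C₂ → RFRun M C₂ rest dfin C' →
      RFRun M C ((d, a) :: rest) dfin C'

/-- Race-avoiding: every feasible run is the untimed projection of a race-free timed run. -/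
def RaceAvoiding (M : MMT I O X Q) : Prop :=
  ∀ w, M.Feasible w →
    ∃ ds : List ℝ, ∃ dfin C, ds.length = w.length ∧ RFRun M M.initC (ds.zip w) dfin C

/-- Starting times of the inputs occurring in a timed run. -/
def inputTimes : ℝ → List (ℝ × Act I X) → List ℝ
  | _, [] => []
  | t, (d, Act.inp _) :: rest => (t + d) :: inputTimes (t + d) rest
  | t, (d, Act.to _) :: rest => inputTimes (t + d) rest

/-- A timed run is transparent if the fractional parts of the starting times of its
inputs are pairwise distinct. -/
def Transparent (ts : List (ℝ × Act I X)) : Prop :=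
  (inputTimes 0 ts).Pairwise fun a b => Int.fract a ≠ Int.fract b

/-- The timed input word of a timed run (with final delay), merging delays around
timeouts. -/
def tiw : List (ℝ × Act I X) → ℝ → List (ℝ × I) × ℝ
  | [], dfin => ([], dfin)
  | (d, Act.inp i) :: rest, dfin =>
    let r := tiw rest dfin
    ((d, i) :: r.1, r.2)
  | (d, Act.to _) :: rest, dfin =>
    match tiw rest dfin with
    | ([], f) => ([], d + f)
    | ((d', i) :: l, f) => ((d + d', i) :: l, f)

/-- Timer `x`, active at the end of the feasible run reading `w`, is live after it:
it expires in some feasible extension before being stopped or restarted. -/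
def Live (M : MMT I O X Q) (w : List (Act I X)) (x : X) : Prop :=
  ∃ w', M.Feasible (w ++ w' ++ [Act.to x]) ∧
    M.causeOf (w ++ w') x = M.causeOf w x ∧
    (∀ k ≤ w'.length, ∃ q, M.stateAfter M.q0 (w ++ w'.take k) = some q ∧ x ∈ M.chi q)

/-! ### Functional simulations and observation trees -/

/-- Renaming of actions along a timer renaming. -/
def gAct (g : X₁ → X₂) : Act I X₁ → Act I X₂
  | Act.inp i => Act.inp i
  | Act.to x => Act.to (g x)

/-- Functional simulation from an observation tree `T` into an MMT `M`. -/
structure FunSim (T : MMT I O X₁ Q₁) (M : MMT I O X₂ Q₂) (f : Q₁ → Q₂) (g : X₁ → X₂) :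
    Prop where
  fs0 : f T.q0 = M.q0
  fs1 : ∀ q x, x ∈ T.chi q → g x ∈ M.chi (f q)
  fs2 : ∀ q x y, x ∈ T.chi q → y ∈ T.chi q → x ≠ y → g x ≠ g y
  fs3 : ∀ q a t, T.δ q a = some t → ∃ u, M.δ (f q) (gAct g a) = some (f t.1, t.2.1, u)
  fs4 : ∀ w q x, T.stateAfter T.q0 w = some q → (T.δ q (Act.to x)).isSome →
      T.causeOf w x = M.causeOf (w.map (gAct g)) (g x)

/-- In an observation tree, a timer is enabled in `q` iff its timeout transition exists. -/
def enabledOT (T : MMT I O X Q) (q : Q) : Set X :=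
  {x | (T.δ q (Act.to x)).isSome}

/-- The run from `p` reading `w` is `x`-spanning. -/
def SpanningFrom (M : MMT I O X Q) (p : Q) (w : List (Act I X)) (x : X) : Prop :=
  ∃ tr, M.trace? p w = some tr ∧ 1 ≤ tr.length ∧
    (∃ t c, tr.head? = some t ∧ t.upd = some (x, c)) ∧
    (∃ t, tr.getLast? = some t ∧ t.act = Act.to x) ∧
    (∀ j t, 1 ≤ j → j + 1 < tr.length → tr[j]? = some t → ∀ c, t.upd ≠ some (x, c)) ∧
    (∀ j t, 1 ≤ j → j < tr.length → tr[j]? = some t → x ∈ M.chi t.src)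

/-- Observation tree structure: `xt q` is the own timer of state `q`. -/
structure IsObsTree (T : MMT I O X Q) (xt : Q → X) : Prop where
  root_chi : T.chi T.q0 = ∅
  tree : ∀ q : Q, ∃! w, T.stateAfter T.q0 w = some q
  fresh : ∀ q i t x c, T.δ q (Act.inp i) = some t → t.2.2 = some (x, c) → x = xt t.1
  to_self : ∀ q y t x c, T.δ q (Act.to y) = some t → t.2.2 = some (x, c) → x = y
  feas : ∀ w, (T.stateAfter T.q0 w).isSome → T.Feasible w
  active_iff : ∀ q x, x ∈ T.chi q ↔
      ∃ p w j, T.SpanningFrom p w x ∧ 1 ≤ j ∧ j < w.length ∧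
        T.stateAfter p (w.take j) = some q
  enabled_iff : ∀ q x, x ∈ T.enabled q ↔ (T.δ q (Act.to x)).isSome

/-! ### Matchings, copy runs and apartness -/

/-- `m` is a matching from the active timers of `p` to those of `p'`. -/
def IsMatching (T : MMT I O X Q) (p p' : Q) (m : X → Option X) : Prop :=
  (∀ x y, m x = some y → x ∈ T.chi p ∧ y ∈ T.chi p') ∧
  (∀ x₁ x₂ y, m x₁ = some y → m x₂ = some y → x₁ = x₂)

/-- Maximal matching: total or surjective on the active timers. -/
def MaxMatching (T : MMT I O X Q) (p p' : Q) (m : X → Option X) : Prop :=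
  IsMatching T p p' m ∧
    ((∀ x ∈ T.chi p, (m x).isSome) ∨ (∀ y ∈ T.chi p', ∃ x, m x = some y))

/-- Copy of the run reading `w` from `p` onto a run from `p'`, translating actions via
the matching and the fresh timers of visited states; returns the copied word and the
extended matching `m↑`. -/
noncomputable def copyAux (T : MMT I O X Q) (xt : Q → X) :
    (X → Option X) → Q → Q → List (Act I X) → Option (List (Act I X) × (X → Option X))
  | m, _, _, [] => some ([], m)
  | m, p, p', a :: rest =>
    (match a with
      | Act.inp i => some (Act.inp i : Act I X)
      | Act.to x => (m x).map Act.to).bind fun a' =>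
      (T.δ p a).bind fun t =>
        (T.δ p' a').bind fun t' =>
          (copyAux T xt (fun z => if z = xt t.1 then some (xt t'.1) else m z) t.1 t'.1
              rest).map fun (r : List (Act I X) × (X → Option X)) => (a' :: r.1, r.2)

/-- `w` witnesses that `p` and `p'` are `m`-apart (structural or behavioral). -/
def Witness (T : MMT I O X Q) (xt : Q → X) (E : Set Q) (m : X → Option X)
    (p p' : Q) (w : List (Act I X)) : Prop :=
  ∃ w' mf qn qn',
    copyAux T xt m p p' w = some (w', mf) ∧
    T.stateAfter p w = some qn ∧ T.stateAfter p' w' = some qn' ∧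
    ((∃ x y q, mf x = some y ∧ x ∈ T.chi q ∧ y ∈ T.chi q) ∨
      (∃ tr tr' t t', T.trace? p w = some tr ∧ T.trace? p' w' = some tr' ∧
        tr.getLast? = some t ∧ tr'.getLast? = some t' ∧
        (t.out ≠ t'.out ∨
          ∃ x c x' c', t.upd = some (x, c) ∧ t'.upd = some (x', c') ∧ c ≠ c')) ∨
      (qn ∈ E ∧ qn' ∈ E ∧ (T.enabledOT qn).ncard ≠ (T.enabledOT qn').ncard) ∨
      (qn ∈ E ∧ qn' ∈ E ∧
        ∃ x y, mf x = some y ∧ ¬(x ∈ T.enabledOT qn ↔ y ∈ T.enabledOT qn')))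

/-- `w` witnesses a behavioral apartness of `p` and `p'` under `m`. -/
def WitnessBeh (T : MMT I O X Q) (xt : Q → X) (E : Set Q) (m : X → Option X)
    (p p' : Q) (w : List (Act I X)) : Prop :=
  ∃ w' mf qn qn',
    copyAux T xt m p p' w = some (w', mf) ∧
    T.stateAfter p w = some qn ∧ T.stateAfter p' w' = some qn' ∧
    ((∃ tr tr' t t', T.trace? p w = some tr ∧ T.trace? p' w' = some tr' ∧
        tr.getLast? = some t ∧ tr'.getLast? = some t' ∧
        (t.out ≠ t'.out ∨
          ∃ x c x' c', t.upd = some (x, c) ∧ t'.upd = some (x', c') ∧ c ≠ c')) ∨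
      (qn ∈ E ∧ qn' ∈ E ∧ (T.enabledOT qn).ncard ≠ (T.enabledOT qn').ncard) ∨
      (qn ∈ E ∧ qn' ∈ E ∧
        ∃ x y, mf x = some y ∧ ¬(x ∈ T.enabledOT qn ↔ y ∈ T.enabledOT qn')))

/-- `p` and `p'` are `m`-apart. -/
def Apart (T : MMT I O X Q) (xt : Q → X) (E : Set Q) (m : X → Option X)
    (p p' : Q) : Prop :=
  ∃ w, Witness T xt E m p p' w

/-- `E` is a set of explored states: the tree-enabled timers of each `q ∈ E` are in
one-to-one correspondence (via `g`) with the enabled timers of `f q`. -/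
def ExploredOK (T : MMT I O X₁ Q₁) (M : MMT I O X₂ Q₂) (f : Q₁ → Q₂) (g : X₁ → X₂)
    (E : Set Q₁) : Prop :=
  ∀ q ∈ E, Set.BijOn g (T.enabledOT q) (M.enabled (f q))

/-- The composed matching `μ ∘ m⁻¹`. -/
noncomputable def invComp (μ m : X → Option X) : X → Option X :=
  fun y => if h : ∃ x, m x = some y then μ h.choose else none

/-- Result of replaying a run. -/
inductive ReplayResult where
  | DONE | APART | ACTIVE

/-- Replaying the run reading `w` from `p'` against the (static) observation tree. -/
noncomputable def replayRes (T : MMT I O X Q) (xt : Q → X) (E : Set Q)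
    (m : X → Option X) (p p' : Q) (w : List (Act I X)) : ReplayResult :=
  if Apart T xt E m p p' then ReplayResult.APART
  else if (copyAux T xt m p p' w).isSome then ReplayResult.DONE
  else ReplayResult.ACTIVE

/-! ### Transparency of timed traces over `TLabel` -/

def inputTimesL : ℝ → List (TLabel I O) → List ℝ
  | _, [] => []
  | t, TLabel.delay d :: rest => inputTimesL (t + d) rest
  | t, TLabel.inp _ _ :: rest => t :: inputTimesL t rest
  | t, TLabel.tout _ :: rest => inputTimesL t rest

/-- A timed trace is transparent if the fractional parts of the starting times of its
inputs are pairwise distinct. -/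
def TransparentTr (w : List (TLabel I O)) : Prop :=
  (inputTimesL 0 w).Pairwise fun a b => Int.fract a ≠ Int.fract b

end MMT

namespace MMT

variable {I O X Q : Type}

theorem extend_if_mono {m m' : X → Option X} (hsub : ∀ x y, m x = some y → m' x = some y)
    (a b x y : X) (h : (if x = a then some b else m x) = some y) :
    (if x = a then some b else m' x) = some y := by
  split_ifs at h ⊢
  · exact h
  · exact hsub x y h

-- Copying consults `m` only at the timers that time out, and `m↑` only adds fresh pairs to `m`.
theorem copyAux_mono (T : MMT I O X Q) (xt : Q → X) {m m' : X → Option X}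
    (hsub : ∀ x y, m x = some y → m' x = some y) {p p' : Q} {w w' : List (Act I X)}
    {mf : X → Option X} (h : copyAux T xt m p p' w = some (w', mf)) :
    ∃ mf', copyAux T xt m' p p' w = some (w', mf') ∧
      ∀ x y, mf x = some y → mf' x = some y := by
  induction w generalizing m m' p p' w' with
  | nil =>
    simp only [copyAux, Option.some.injEq, Prod.mk.injEq] at h
    obtain ⟨rfl, rfl⟩ := h
    exact ⟨m', rfl, hsub⟩
  | cons a rest ih =>
    simp only [copyAux, Option.bind_eq_some_iff, Option.map_eq_some_iff] at h ⊢
    obtain ⟨a', ha', t, ht, t', ht', ⟨v, mv⟩, hr, hw'⟩ := h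
    cases hw'
    obtain ⟨mf', hr', hmf⟩ := ih (extend_if_mono hsub (xt t.1) (xt t'.1)) hr
    refine ⟨mf', ⟨a', ?_, t, ht, t', ht', (v, mf'), hr', rfl⟩, hmf⟩
    rcases a with _ | x
    · exact ha'
    · obtain ⟨y, hy, rfl⟩ := Option.map_eq_some_iff.mp ha'
      exact Option.map_eq_some_iff.mpr ⟨y, hsub x y hy, rfl⟩

end MMT

open MMT in
theorem apartness_monotone_general {I O X Q : Type}
    (T : MMT I O X Q) (xt : Q → X) (E : Set Q) (p p' : Q)
    (m m' : X → Option X) (w : List (Act I X))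
    (hsub : ∀ x y, m x = some y → m' x = some y)
    (hw : Witness T xt E m p p' w) :
    Witness T xt E m' p p' w := by
  obtain ⟨w', mf, qn, qn', hcopy, hqn, hqn', hdisj⟩ := hw
  obtain ⟨mf', hcopy', hmf⟩ := copyAux_mono T xt hsub hcopy
  refine ⟨w', mf', qn, qn', hcopy', hqn, hqn', ?_⟩
  rcases hdisj with ⟨x, y, q, hxy, hxq, hyq⟩ | hout | hcard | ⟨hqnE, hqnE', x, y, hxy, hen⟩
  · exact Or.inl ⟨x, y, q, hmf x y hxy, hxq, hyq⟩
  · exact Or.inr (Or.inl hout)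
  · exact Or.inr (Or.inr (Or.inl hcard))
  · exact Or.inr (Or.inr (Or.inr ⟨hqnE, hqnE', x, y, hmf x y hxy, hen⟩))

open MMT in
/-- Apartness is monotone in the matching: a witness of `p #^m p'` remains a witness
for any larger matching `m'`. -/
theorem apartness_monotone {I O X Q : Type}
    (T : MMT I O X Q) (xt : Q → X) (E : Set Q) (p p' : Q)
    (m m' : X → Option X) (w : List (Act I X))
    (hm : IsMatching T p p' m) (hm' : IsMatching T p p' m')
    (hsub : ∀ x y, m x = some y → m' x = some y)
    (hw : Witness T xt E m p p' w) :
    Witness T xt E m' p p' w :=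
  apartness_monotone_general T xt E p p' m m' w hsub hw
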